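/- For a state σ₀ and an invertible positive ρ₀ in a finite-dimensional C*-algebra A₀, the equation b₀ ρ₀ b₀ = σ₀ has the unique positive solution b₀ = σ₀^{1/2}(σ₀^{1/2} ρ₀ σ₀^{1/2})^{-1/2} σ₀^{1/2}, where the inverse is taken on the support of σ₀^{1/2} ρ₀ σ₀^{1/2}. -/

import Mathlib

open Matrix ComplexOrder

variable {n m : Type*} [Fintype n] [DecidableEq n] [Fintype m] [DecidableEq m]

/-- Partial trace over the first tensor factor `B` of `B ⊗ A`,
realized on matrices indexed by products. -/
noncomputable def ptrace (X : Matrix (m × n) (m × n) ℂ) : Matrix n n ℂ :=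
  Matrix.of fun a b => ∑ i, X (i, a) (i, b)

/-- The Choi matrix of a linear map `Φ : A → B` (on full matrix algebras). -/
noncomputable def choi (Φ : Matrix n n ℂ →ₗ[ℂ] Matrix m m ℂ) : Matrix (m × n) (m × n) ℂ :=
  Matrix.of fun p q => Φ (Matrix.single p.2 q.2 1) p.1 q.1

/-- Hilbert–Schmidt orthogonal complement of a subspace. -/
noncomputable def hsPerp {k : Type*} [Fintype k] (J : Submodule ℂ (Matrix k k ℂ)) :
    Submodule ℂ (Matrix k k ℂ) where
  carrier := {x | ∀ a ∈ J, Matrix.trace (aᴴ * x) = 0}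
  add_mem' := by
    intro x y hx hy a ha
    simp [Matrix.mul_add, hx a ha, hy a ha]
  zero_mem' := by intro a ha; simp
  smul_mem' := by
    intro c x hx a ha
    simp [Matrix.mul_smul, hx a ha]

/-- Hilbert–Schmidt orthogonal complement of the transpose `J^T` of a subspace `J`. -/
def hsPerpT {k : Type*} [Fintype k] (J : Submodule ℂ (Matrix k k ℂ)) : Set (Matrix k k ℂ) :=
  {x | ∀ a ∈ J, Matrix.trace (aᵀᴴ * x) = 0}

/-- A subspace is positively generated if it is spanned by its positive elements. -/
def PositivelyGenerated {k : Type*} [Fintype k] (J : Submodule ℂ (Matrix k k ℂ)) : Prop :=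
  J = Submodule.span ℂ {a : Matrix k k ℂ | a ∈ J ∧ a.PosSemidef}

/-- `P` is the support projection of `X`: a Hermitian idempotent with the same range. -/
def IsSupportProj {k : Type*} [Fintype k] [DecidableEq k] (X P : Matrix k k ℂ) : Prop :=
  P.IsHermitian ∧ P * P = P ∧
    LinearMap.range (Matrix.toLin' P) = LinearMap.range (Matrix.toLin' X)
open scoped Classical

/-- Positive square root of a positive semidefinite matrix (junk value `0` otherwise). -/
noncomputable def msqrt {k : Type*} [Fintype k] [DecidableEq k] (x : Matrix k k ℂ) :
    Matrix k k ℂ :=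
  if h : x.PosSemidef then
    (h.1.eigenvectorUnitary : Matrix k k ℂ) *
      Matrix.diagonal ((↑) ∘ (Real.sqrt ·) ∘ h.1.eigenvalues) *
      (star h.1.eigenvectorUnitary : Matrix k k ℂ)
  else 0

/-- `x^{-1/2}`, with the inverse taken on the support of `x` (for Hermitian `x`;
junk value `0` otherwise). -/
noncomputable def invSqrtOnSupp {k : Type*} [Fintype k] [DecidableEq k]
    (x : Matrix k k ℂ) : Matrix k k ℂ :=
  if h : x.IsHermitian then
    (h.eigenvectorUnitary : Matrix k k ℂ) *
      Matrix.diagonal (fun i => ((Real.sqrt (h.eigenvalues i) : ℂ))⁻¹) *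
      (star h.eigenvectorUnitary : Matrix k k ℂ)
  else 0

/-- The expression `b₀ = σ₀^{1/2} (σ₀^{1/2} ρ₀ σ₀^{1/2})^{-1/2} σ₀^{1/2}`. -/
noncomputable def bform {k : Type*} [Fintype k] [DecidableEq k]
    (ρ₀ σ₀ : Matrix k k ℂ) : Matrix k k ℂ :=
  msqrt σ₀ * invSqrtOnSupp (msqrt σ₀ * ρ₀ * msqrt σ₀) * msqrt σ₀

/-! Put `s = σ₀^{1/2}` and `x = s ρ₀ s`. Because `ρ₀` is invertible, `x` and `s` have the
same kernel, so the support projection `P = x^{-1/2} x x^{-1/2}` of `x` satisfies `s P = s`;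
hence `b₀ = s x^{-1/2} s` solves `b₀ ρ₀ b₀ = s P s = σ₀`. For uniqueness, with `r = ρ₀^{1/2}`
every positive solution `b` satisfies `(r b r)² = r σ₀ r`, so `r b r` is the positive square
root of `r σ₀ r`, and `r` is invertible. -/

open scoped MatrixOrder

section

variable {k l 𝕜 : Type*} [Fintype k] [DecidableEq k] [RCLike 𝕜]

lemma Matrix.PosDef.exists_isUnit_nonneg_mul_self_eq {ρ : Matrix k k 𝕜} (hρ : ρ.PosDef) :
    ∃ r : Matrix k k 𝕜, 0 ≤ r ∧ IsUnit r ∧ r * r = ρ :=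
  ⟨CFC.sqrt ρ, CFC.sqrt_nonneg ρ, (CFC.isUnit_sqrt_iff ρ hρ.posSemidef.nonneg).mpr hρ.isUnit,
    CFC.sqrt_mul_sqrt_self ρ hρ.posSemidef.nonneg⟩

lemma Matrix.PosDef.eq_zero_of_conjTranspose_mul_mul_eq_zero {ρ : Matrix k k 𝕜}
    {X : Matrix k l 𝕜} (hρ : ρ.PosDef) (h : Xᴴ * ρ * X = 0) : X = 0 := by
  obtain ⟨r, hr₀, hr, rfl⟩ := hρ.exists_isUnit_nonneg_mul_self_eq
  have hrX : r * X = 0 := by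
    rw [← conjTranspose_mul_self_eq_zero, conjTranspose_mul, hr₀.posSemidef.1.eq, ← h]
    simp only [Matrix.mul_assoc]
  rw [← nonsing_inv_mul_cancel_left _ X ((isUnit_iff_isUnit_det r).mp hr), hrX, Matrix.mul_zero]

lemma Matrix.PosSemidef.eq_of_mul_mul_eq_mul_mul {ρ b c : Matrix k k 𝕜} (hρ : ρ.PosDef)
    (hb : b.PosSemidef) (hc : c.PosSemidef) (h : b * ρ * b = c * ρ * c) : b = c := by
  obtain ⟨r, hr₀, hr, rfl⟩ := hρ.exists_isUnit_nonneg_mul_self_eq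
  have hsq (a : Matrix k k 𝕜) : (r * a * r) ^ 2 = r * (a * (r * r) * a) * r := by
    simp only [sq, Matrix.mul_assoc]
  have hconj : r * b * r = r * c * r :=
    (CFC.sq_eq_sq_iff _ _ (hr₀.isSelfAdjoint.conjugate_nonneg hb.nonneg)
      (hr₀.isSelfAdjoint.conjugate_nonneg hc.nonneg)).mp (by rw [hsq, hsq, h])
  exact hr.mul_left_cancel (hr.mul_right_cancel hconj)

lemma Matrix.PosDef.mul_eq_self_of_mul_conjTranspose_mul_mul [Fintype l] [DecidableEq l]
    {ρ : Matrix k k 𝕜} {S : Matrix k l 𝕜} {P : Matrix l l 𝕜} (hρ : ρ.PosDef)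
    (hP : P.IsHermitian) (h : P * (Sᴴ * ρ * S) = Sᴴ * ρ * S) : S * P = S := by
  set x := Sᴴ * ρ * S
  have hx : x.IsHermitian := (hρ.posSemidef.conjTranspose_mul_mul_same S).1
  have hxP : x * P = x := by
    simpa only [conjTranspose_mul, hx.eq, hP.eq] using congrArg (·ᴴ) h
  have hzero : (S * (1 - P))ᴴ * ρ * (S * (1 - P)) = 0 := calc
    _ = (1 - P) * x * (1 - P) := by
      simp only [conjTranspose_mul, conjTranspose_sub, conjTranspose_one, hP.eq,
        Matrix.mul_assoc, x]
    _ = x - P * x - x * P + P * (x * P) := by noncomm_ring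
    _ = 0 := by rw [hxP, h]; abel
  have := hρ.eq_zero_of_conjTranspose_mul_mul_eq_zero hzero
  rwa [Matrix.mul_sub, Matrix.mul_one, sub_eq_zero, eq_comm] at this

end

section

variable {k : Type*} [Fintype k] [DecidableEq k]

lemma msqrt_eq_sqrt {x : Matrix k k ℂ} (hx : x.PosSemidef) : msqrt x = CFC.sqrt x := by
  rw [CFC.sqrt_eq_real_sqrt x hx.nonneg, cfcₙ_eq_cfc, hx.1.cfc_eq, msqrt, dif_pos hx]
  rfl

lemma invSqrtOnSupp_eq_cfc {x : Matrix k k ℂ} (hx : x.IsHermitian) :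
    invSqrtOnSupp x = cfc (fun t => (√t)⁻¹) x := by
  rw [hx.cfc_eq, invSqrtOnSupp, dif_pos hx, IsHermitian.cfc]
  simp [Function.comp_def]

lemma invSqrtOnSupp_nonneg {x : Matrix k k ℂ} (hx : x.IsHermitian) : 0 ≤ invSqrtOnSupp x := by
  rw [invSqrtOnSupp_eq_cfc hx]
  exact cfc_nonneg fun t _ => inv_nonneg.mpr (Real.sqrt_nonneg t)

lemma invSqrtOnSupp_mul_mul_mul_self {x : Matrix k k ℂ} (hx : x.PosSemidef) :
    invSqrtOnSupp x * x * invSqrtOnSupp x * x = x := by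
  have hcont (f : ℝ → ℝ) : ContinuousOn f (spectrum ℝ x) :=
    x.finite_real_spectrum.continuousOn f
  rw [invSqrtOnSupp_eq_cfc hx.1]
  nth_rw 2 4 5 [← cfc_id' ℝ x]
  rw [← cfc_mul _ _ _ (hcont _) (hcont _), ← cfc_mul _ _ _ (hcont _) (hcont _),
    ← cfc_mul _ _ _ (hcont _) (hcont _)]
  refine cfc_congr fun t ht => ?_
  rcases (spectrum_nonneg_of_nonneg hx.nonneg ht).eq_or_lt with rfl | ht₀
  · simp
  · have := Real.sq_sqrt ht₀.le
    field_simp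
    linarith

end

theorem unique_positive_solution_general
    (ρ₀ σ₀ : Matrix n n ℂ) (hρ : ρ₀.PosDef) (hσ : σ₀.PosSemidef) :
    (bform ρ₀ σ₀).PosSemidef ∧ bform ρ₀ σ₀ * ρ₀ * bform ρ₀ σ₀ = σ₀ ∧
      ∀ b : Matrix n n ℂ, b.PosSemidef → b * ρ₀ * b = σ₀ → b = bform ρ₀ σ₀ := by
  simp only [bform, msqrt_eq_sqrt hσ]
  set s := CFC.sqrt σ₀
  set q := invSqrtOnSupp (s * ρ₀ * s)
  have hs : 0 ≤ s := CFC.sqrt_nonneg σ₀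
  have hss : s * s = σ₀ := CFC.sqrt_mul_sqrt_self σ₀ hσ.nonneg
  have hx : (s * ρ₀ * s).PosSemidef :=
    (hs.isSelfAdjoint.conjugate_nonneg hρ.posSemidef.nonneg).posSemidef
  have hq : 0 ≤ q := invSqrtOnSupp_nonneg hx.1
  have hsP : s * (q * (s * ρ₀ * s) * q) = s := by
    refine hρ.mul_eq_self_of_mul_conjTranspose_mul_mul
      (hq.isSelfAdjoint.conjugate_nonneg hx.nonneg).posSemidef.1 ?_
    rw [hs.posSemidef.1.eq]
    exact invSqrtOnSupp_mul_mul_mul_self hx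
  have hb : (s * q * s).PosSemidef := (hs.isSelfAdjoint.conjugate_nonneg hq).posSemidef
  have hsol : s * q * s * ρ₀ * (s * q * s) = σ₀ := calc
    _ = s * (q * (s * ρ₀ * s) * q) * s := by simp only [Matrix.mul_assoc]
    _ = σ₀ := by rw [hsP, hss]
  exact ⟨hb, hsol, fun b hb' h => hb'.eq_of_mul_mul_eq_mul_mul hρ hb (h.trans hsol.symm)⟩

/-- for a state `σ₀` and invertible positive `ρ₀`,
`b₀ ρ₀ b₀ = σ₀` has the unique positive solution
`b₀ = σ₀^{1/2}(σ₀^{1/2} ρ₀ σ₀^{1/2})^{-1/2} σ₀^{1/2}`. -/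
theorem unique_positive_solution
    (ρ₀ σ₀ : Matrix n n ℂ) (hρ : ρ₀.PosDef) (hσ : σ₀.PosSemidef)
    (hσtr : Matrix.trace σ₀ = 1) :
    (bform ρ₀ σ₀).PosSemidef ∧ bform ρ₀ σ₀ * ρ₀ * bform ρ₀ σ₀ = σ₀ ∧
      ∀ b : Matrix n n ℂ, b.PosSemidef → b * ρ₀ * b = σ₀ → b = bform ρ₀ σ₀ :=
  unique_positive_solution_general ρ₀ σ₀ hρ hσ
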